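/- Suppose J is naturally monotonically backward separable with representation maps {φ_t}_{t=0}^T, Γ_{x,t} ≠ ∅ for all x ∈ X_t and t ∈ {0,…,T−1}, and V : ℝ^n × {0,…,T} → ℝ satisfies the Generalized Bellman Equation. If the sequences u* = (u*(0),…,u*(T−1)) and x* = (x*(0),…,x*(T)) satisfy x*(0) = x_0, x*(k+1) = f(x*(k),u*(k),k), and u*(k) ∈ arg inf_{u ∈ Γ_{x*(k),k}} φ_k(x*(k), u, V(f(x*(k),u,k), k+1)) for every k ∈ {0,…,T−1}, then (u*, x*) is feasible for the MSOP initialized at x_0 and attains the minimum: J(u*,x*) = inf over all feasible (u,x) of J(u,x). -/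

import Mathlib

/-!
By backward induction, `V (a, t)` is the infimum of the costs of all feasible continuations from
state `a` at time `t`. In the Bellman step the inner infimum, over the inputs after time `t`, can
be moved inside `φ_t`: tail costs decreasing to it exist, and along them `φ_t` is monotone and
continuous; the bounded images make all these infima finite. Along `(u*, x*)` every Bellman
infimum is attained, so `J (u*, x*) = V (x₀, 0)`, the infimum of the costs of feasible pairs.
-/

open Set Filter MeasureTheory

/-- `nest φ φT u x t k` is the backward composition of representation maps
`φ t (x t) (u t) (φ (t+1) (x (t+1)) (u (t+1)) (… (φT (x (t+k))) …)))`
with `k` composition steps, terminating at time `t + k`. -/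
def nest {α β : Type*} (φ : ℕ → α → β → ℝ → ℝ) (φT : α → ℝ)
    (u : ℕ → β) (x : ℕ → α) : ℕ → ℕ → ℝ
  | t, 0 => φT (x t)
  | t, k + 1 => φ t (x t) (u t) (nest φ φT u x (t + 1) k)

/-- `imSet φ φT X U t k` is the image of the representation map at time `t`
over its domain, where `k` is the number of remaining steps until the terminal
time `t + k` (so `Image φ_t = imSet φ φT X U t (T - t)` when the horizon is `T`). -/
def imSet {α β : Type*} (φ : ℕ → α → β → ℝ → ℝ) (φT : α → ℝ)
    (X : ℕ → Set α) (U : Set β) : ℕ → ℕ → Set ℝ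
  | t, 0 => φT '' X t
  | t, k + 1 =>
      {z | ∃ a ∈ X t, ∃ b ∈ U, ∃ w ∈ imSet φ φT X U (t + 1) k, z = φ t a b w}

/-- `J` is represented on its domain by the representation maps `φ, φT`
(backward composition with horizon `T`). -/
def IsRep {α β : Type*} (T : ℕ) (X : ℕ → Set α) (U : Set β)
    (J : (ℕ → β) → (ℕ → α) → ℝ) (φ : ℕ → α → β → ℝ → ℝ) (φT : α → ℝ) : Prop :=
  ∀ u x, (∀ t, t < T → u t ∈ U) → (∀ t, t ≤ T → x t ∈ X t) →
    J u x = nest φ φT u x 0 T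

/-- each representation map is monotone in its third argument on the image of
the next representation map. -/
def MonoRep {α β : Type*} (T : ℕ) (X : ℕ → Set α) (U : Set β)
    (φ : ℕ → α → β → ℝ → ℝ) (φT : α → ℝ) : Prop :=
  ∀ t, t < T → ∀ a ∈ X t, ∀ b ∈ U,
    ∀ z ∈ imSet φ φT X U (t + 1) (T - (t + 1)),
      ∀ w ∈ imSet φ φT X U (t + 1) (T - (t + 1)),
        w ≤ z → φ t a b w ≤ φ t a b z

/-- each representation map is strictly monotone in its third argument. -/
def StrictMonoRep {α β : Type*} (T : ℕ) (X : ℕ → Set α) (U : Set β)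
    (φ : ℕ → α → β → ℝ → ℝ) (φT : α → ℝ) : Prop :=
  ∀ t, t < T → ∀ a ∈ X t, ∀ b ∈ U,
    ∀ z ∈ imSet φ φT X U (t + 1) (T - (t + 1)),
      ∀ w ∈ imSet φ φT X U (t + 1) (T - (t + 1)),
        w < z → φ t a b w < φ t a b z

/-- each representation map is upper semi-continuous in its third argument along
monotonically decreasing sequences in the image of the next representation map. -/
def USCRep {α β : Type*} (T : ℕ) (X : ℕ → Set α) (U : Set β)
    (φ : ℕ → α → β → ℝ → ℝ) (φT : α → ℝ) : Prop :=
  ∀ t, t < T → ∀ a ∈ X t, ∀ b ∈ U, ∀ z : ℕ → ℝ,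
    (∀ i, z i ∈ imSet φ φT X U (t + 1) (T - (t + 1))) →
    (∀ i, z (i + 1) ≤ z i) →
    ∀ L : ℝ, Tendsto z atTop (nhds L) →
      Tendsto (fun i => φ t a b (z i)) atTop (nhds (φ t a b L))

/-- each representation map has bounded image. -/
def BddRep {α β : Type*} (T : ℕ) (X : ℕ → Set α) (U : Set β)
    (φ : ℕ → α → β → ℝ → ℝ) (φT : α → ℝ) : Prop :=
  ∀ t, t ≤ T → ∃ R, 0 < R ∧ ∀ z ∈ imSet φ φT X U t (T - t), |z| < R

/-- `GamSeq T f X U x0 s u x` says that the input sequence `(u s, …, u (T-1))`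
belongs to `Γ_{x0,[s,T-1]}`, with `x` the corresponding state sequence:
`x s = x0`, `x (t+1) = f (x t) (u t) t`, `u t ∈ Γ_{x t, t}` for `s ≤ t ≤ T-1`. -/
def GamSeq {α β : Type*} (T : ℕ) (f : α → β → ℕ → α) (X : ℕ → Set α)
    (U : Set β) (x0 : α) (s : ℕ) (u : ℕ → β) (x : ℕ → α) : Prop :=
  x s = x0 ∧ ∀ t, s ≤ t → t < T →
    u t ∈ U ∧ x (t + 1) = f (x t) (u t) t ∧ x (t + 1) ∈ X (t + 1)

/-- `(u,x)` is feasible for the MSOP with horizon `T` initialized at `x0` at time `0`. -/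
def Feas {α β : Type*} (T : ℕ) (f : α → β → ℕ → α) (X : ℕ → Set α)
    (U : Set β) (x0 : α) (u : ℕ → β) (x : ℕ → α) : Prop :=
  x 0 = x0 ∧ (∀ t, t ≤ T → x t ∈ X t) ∧
    ∀ t, t < T → u t ∈ U ∧ x (t + 1) = f (x t) (u t) t

/-- `(u,x)` is feasible for the MSOP with horizon `T` initialized at `x0` at time `s`. -/
def FeasFrom {α β : Type*} (T : ℕ) (f : α → β → ℕ → α) (X : ℕ → Set α)
    (U : Set β) (x0 : α) (s : ℕ) (u : ℕ → β) (x : ℕ → α) : Prop :=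
  x s = x0 ∧ (∀ t, s ≤ t → t ≤ T → x t ∈ X t) ∧
    ∀ t, s ≤ t → t < T → u t ∈ U ∧ x (t + 1) = f (x t) (u t) t

open Topology

/-- The form in which `USCRep` states the paper's upper semicontinuity along decreasing
sequences. -/
def AntitoneSeqContinuousOn (g : ℝ → ℝ) (I : Set ℝ) : Prop :=
  ∀ z : ℕ → ℝ, (∀ i, z i ∈ I) → Antitone z → ∀ L, Tendsto z atTop (𝓝 L) →
    Tendsto (g ∘ z) atTop (𝓝 (g L))

section

variable {g : ℝ → ℝ} {I C : Set ℝ} {v : ℝ}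

theorem IsGLB.exists_seq_tendsto_comp (hg : AntitoneSeqContinuousOn g I) (hCI : C ⊆ I)
    (hv : IsGLB C v) :
    ∃ z : ℕ → ℝ, (∀ i, z i ∈ C) ∧ Tendsto z atTop (𝓝 v) ∧ Tendsto (g ∘ z) atTop (𝓝 (g v)) := by
  obtain ⟨z, hanti, -, hlim, hmem⟩ := hv.exists_seq_antitone_tendsto hv.nonempty
  exact ⟨z, hmem, hlim, hg z (fun i => hCI (hmem i)) hanti v hlim⟩

theorem IsGLB.map_le_of_mem (hmono : MonotoneOn g I) (hg : AntitoneSeqContinuousOn g I)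
    (hCI : C ⊆ I) (hv : IsGLB C v) {w : ℝ} (hw : w ∈ C) : g v ≤ g w := by
  rcases (hv.1 hw).eq_or_lt with rfl | hlt
  · exact le_rfl
  obtain ⟨z, hzC, hz, hgz⟩ := hv.exists_seq_tendsto_comp hg hCI
  exact le_of_tendsto hgz <| (hz.eventually_lt_const hlt).mono fun i hi =>
    hmono (hCI (hzC i)) (hCI hw) hi.le

end

/-- `inf_b inf_{c ∈ C b} g b c = inf_b g b (inf (C b))`: the interchange behind the Bellman step. -/
theorem isGLB_biUnion_image {ι : Type*} {I : Set ℝ} {B : Set ι} (hB : B.Nonempty) {g : ι → ℝ → ℝ}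
    {C : ι → Set ℝ} {v : ι → ℝ} (hmono : ∀ b ∈ B, MonotoneOn (g b) I)
    (hg : ∀ b ∈ B, AntitoneSeqContinuousOn (g b) I) (hCI : ∀ b ∈ B, C b ⊆ I)
    (hv : ∀ b ∈ B, IsGLB (C b) (v b)) (hbdd : BddBelow (⋃ b ∈ B, g b '' C b)) :
    IsGLB (⋃ b ∈ B, g b '' C b) (sInf ((fun b => g b (v b)) '' B)) := by
  have hlower : lowerBounds ((fun b => g b (v b)) '' B) = lowerBounds (⋃ b ∈ B, g b '' C b) := by
    ext l
    simp only [mem_lowerBounds, forall_mem_image, mem_iUnion₂, exists_prop]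
    constructor
    · rintro h y ⟨b, hb, c, hc, rfl⟩
      exact (h hb).trans ((hv b hb).map_le_of_mem (hmono b hb) (hg b hb) (hCI b hb) hc)
    · intro h b hb
      obtain ⟨z, hzC, -, hgz⟩ := (hv b hb).exists_seq_tendsto_comp (hg b hb) (hCI b hb)
      exact ge_of_tendsto hgz (Eventually.of_forall fun i => h _ ⟨b, hb, z i, hzC i, rfl⟩)
  have hS : IsGLB ((fun b => g b (v b)) '' B) (sInf ((fun b => g b (v b)) '' B)) :=
    isGLB_csInf (hB.image _) (by rw [BddBelow, hlower]; exact hbdd)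
  rwa [IsGLB, hlower] at hS

section TailCosts

variable {α β : Type*} {T : ℕ} {f : α → β → ℕ → α} {X : ℕ → Set α} {U : Set β}
  {φ : ℕ → α → β → ℝ → ℝ} {φT : α → ℝ}

def tailCosts (T : ℕ) (f : α → β → ℕ → α) (X : ℕ → Set α) (U : Set β)
    (φ : ℕ → α → β → ℝ → ℝ) (φT : α → ℝ) (a : α) (t : ℕ) : Set ℝ :=
  {y | ∃ u x, GamSeq T f X U a t u x ∧ y = nest φ φT u x t (T - t)}

theorem nest_congr {u u' : ℕ → β} {x x' : ℕ → α} {t : ℕ} (hu : ∀ i, t ≤ i → u i = u' i)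
    (hx : ∀ i, t ≤ i → x i = x' i) (d : ℕ) : nest φ φT u x t d = nest φ φT u' x' t d := by
  induction d generalizing t with
  | zero => exact congrArg φT (hx t le_rfl)
  | succ d ih =>
    simp only [nest]
    rw [hu t le_rfl, hx t le_rfl,
      ih (fun i hi => hu i (by omega)) (fun i hi => hx i (by omega))]

theorem nest_sub_of_lt (u : ℕ → β) (x : ℕ → α) {t : ℕ} (ht : t < T) :
    nest φ φT u x t (T - t) = φ t (x t) (u t) (nest φ φT u x (t + 1) (T - (t + 1))) := by
  rw [show T - t = T - (t + 1) + 1 by omega, nest]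

theorem GamSeq.tail {a : α} {t : ℕ} {u : ℕ → β} {x : ℕ → α} (h : GamSeq T f X U a t u x) :
    GamSeq T f X U (x (t + 1)) (t + 1) u x :=
  ⟨rfl, fun s hs hsT => h.2 s (by omega) hsT⟩

theorem GamSeq.cons {a : α} {b : β} {t : ℕ} {u : ℕ → β} {x : ℕ → α} (hb : b ∈ U)
    (hbX : f a b t ∈ X (t + 1)) (h : GamSeq T f X U (f a b t) (t + 1) u x) :
    GamSeq T f X U a t (Function.update u t b) (Function.update x t a) := by
  refine ⟨by simp, fun s hts hsT => ?_⟩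
  rcases hts.eq_or_lt with rfl | hts
  · simp [hb, h.1, hbX]
  · obtain ⟨hu, hdyn, hX⟩ := h.2 s hts hsT
    simp only [Function.update_of_ne hts.ne', Function.update_of_ne (show s + 1 ≠ t by omega)]
    exact ⟨hu, hdyn, hX⟩

theorem tailCosts_self [Nonempty β] (a : α) : tailCosts T f X U φ φT a T = {φT a} := by
  ext y
  constructor
  · rintro ⟨u, x, hux, rfl⟩
    simp [nest, hux.1]
  · rintro rfl
    exact ⟨Classical.arbitrary _, fun _ => a, ⟨rfl, fun s hs hsT => absurd hsT (by omega)⟩,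
      by simp [nest]⟩

/-- The principle of optimality, at the level of sets of costs. -/
theorem tailCosts_of_lt {a : α} {t : ℕ} (ht : t < T) :
    tailCosts T f X U φ φT a t =
      ⋃ b ∈ {b ∈ U | f a b t ∈ X (t + 1)}, φ t a b '' tailCosts T f X U φ φT (f a b t) (t + 1) := by
  ext y
  simp only [mem_iUnion₂, mem_image, mem_ofPred_eq, exists_prop]
  constructor
  · rintro ⟨u, x, hux, rfl⟩
    obtain ⟨hu, hdyn, hX⟩ := hux.2 t le_rfl ht
    rw [hux.1] at hdyn
    refine ⟨u t, ⟨hu, hdyn ▸ hX⟩, _, ⟨u, x, hdyn ▸ hux.tail, rfl⟩, ?_⟩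
    rw [nest_sub_of_lt u x ht, hux.1]
  · rintro ⟨b, ⟨hb, hbX⟩, _, ⟨u, x, hux, rfl⟩, rfl⟩
    refine ⟨_, _, hux.cons hb hbX, ?_⟩
    rw [nest_sub_of_lt _ _ ht, nest_congr (u := Function.update u t b) (x := Function.update x t a)
      (u' := u) (x' := x)]
    · simp
    · exact fun i hi => Function.update_of_ne (by omega) _ _
    · exact fun i hi => Function.update_of_ne (by omega) _ _

theorem tailCosts_subset_imSet {a : α} {t : ℕ} (ha : a ∈ X t) (ht : t ≤ T) :
    tailCosts T f X U φ φT a t ⊆ imSet φ φT X U t (T - t) := by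
  induction ht using Nat.decreasingInduction generalizing a with
  | self =>
    rintro _ ⟨u, x, hux, rfl⟩
    simp only [Nat.sub_self, nest, imSet]
    exact ⟨x T, hux.1 ▸ ha, rfl⟩
  | of_succ t ht ih =>
    rw [tailCosts_of_lt ht, show T - t = T - (t + 1) + 1 by omega]
    rintro _ ⟨_, ⟨b, rfl⟩, _, ⟨⟨hb, hbX⟩, rfl⟩, w, hw, rfl⟩
    exact ⟨a, ha, b, hb, w, ih hbX hw, rfl⟩

theorem feas_iff_gamSeq {x0 : α} (hx0 : x0 ∈ X 0) {u : ℕ → β} {x : ℕ → α} :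
    Feas T f X U x0 u x ↔ GamSeq T f X U x0 0 u x := by
  constructor
  · rintro ⟨h0, hX, hdyn⟩
    exact ⟨h0, fun t _ ht => ⟨(hdyn t ht).1, (hdyn t ht).2, hX (t + 1) ht⟩⟩
  · rintro ⟨h0, h⟩
    refine ⟨h0, fun t ht => ?_, fun t ht => ⟨(h t t.zero_le ht).1, (h t t.zero_le ht).2.1⟩⟩
    cases t with
    | zero => exact h0 ▸ hx0
    | succ t => exact (h t t.zero_le (by omega)).2.2

theorem IsRep.eq_nest_of_feas {J : (ℕ → β) → (ℕ → α) → ℝ} (hRep : IsRep T X U J φ φT)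
    {x0 : α} {u : ℕ → β} {x : ℕ → α} (h : Feas T f X U x0 u x) :
    J u x = nest φ φT u x 0 T :=
  hRep u x (fun t ht => (h.2.2 t ht).1) h.2.1

variable {V : α → ℕ → ℝ}
  (hVT : ∀ a ∈ X T, V a T = φT a)
  (hV : ∀ t, t < T → ∀ a ∈ X t, V a t =
    sInf {y : ℝ | ∃ b ∈ U, f a b t ∈ X (t + 1) ∧ y = φ t a b (V (f a b t) (t + 1))})
include hVT hV

theorem isGLB_tailCosts [Nonempty β] (hMono : MonoRep T X U φ φT) (hUSC : USCRep T X U φ φT)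
    (hBdd : BddRep T X U φ φT) (hGam : ∀ t, t < T → ∀ a ∈ X t, ∃ b ∈ U, f a b t ∈ X (t + 1))
    {t : ℕ} (ht : t ≤ T) {a : α} (ha : a ∈ X t) :
    IsGLB (tailCosts T f X U φ φT a t) (V a t) := by
  induction ht using Nat.decreasingInduction generalizing a with
  | self =>
    rw [tailCosts_self, hVT a ha]
    exact isGLB_singleton
  | of_succ t ht ih =>
    have hbdd : BddBelow (tailCosts T f X U φ φT a t) := by
      obtain ⟨R, -, hR⟩ := hBdd t ht.le
      exact ⟨-R, fun z hz => (abs_lt.1 (hR z (tailCosts_subset_imSet ha ht.le hz))).1.le⟩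
    have hS : {y : ℝ | ∃ b ∈ U, f a b t ∈ X (t + 1) ∧ y = φ t a b (V (f a b t) (t + 1))} =
        (fun b => φ t a b (V (f a b t) (t + 1))) '' {b ∈ U | f a b t ∈ X (t + 1)} := by
      ext y
      simp [eq_comm, and_assoc]
    rw [tailCosts_of_lt ht] at hbdd ⊢
    rw [hV t ht a ha, hS]
    have hB : {b ∈ U | f a b t ∈ X (t + 1)}.Nonempty := hGam t ht a ha
    exact isGLB_biUnion_image hB
      (fun b hb w hw z hz hwz => hMono t ht a ha b hb.1 z hz w hw hwz)
      (fun b hb z hz hanti L hL => hUSC t ht a ha b hb.1 z hz (fun i => hanti i.le_succ) L hL)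
      (fun b hb => tailCosts_subset_imSet hb.2 ht) (fun b hb => ih hb.2) hbdd

theorem value_eq_nest_of_argmin {u : ℕ → β} {x : ℕ → α} (hx : ∀ t, t ≤ T → x t ∈ X t)
    (hdyn : ∀ k, k < T → x (k + 1) = f (x k) (u k) k)
    (hargmin : ∀ k, k < T → (u k ∈ U ∧ f (x k) (u k) k ∈ X (k + 1)) ∧
      ∀ b ∈ U, f (x k) b k ∈ X (k + 1) →
        φ k (x k) (u k) (V (f (x k) (u k) k) (k + 1)) ≤ φ k (x k) b (V (f (x k) b k) (k + 1)))
    {t : ℕ} (ht : t ≤ T) : V (x t) t = nest φ φT u x t (T - t) := by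
  induction ht using Nat.decreasingInduction with
  | self => rw [Nat.sub_self, nest, hVT _ (hx T le_rfl)]
  | of_succ t ht ih =>
    have hleast : IsLeast
        {y | ∃ b ∈ U, f (x t) b t ∈ X (t + 1) ∧ y = φ t (x t) b (V (f (x t) b t) (t + 1))}
        (φ t (x t) (u t) (V (f (x t) (u t) t) (t + 1))) :=
      ⟨⟨u t, (hargmin t ht).1.1, (hargmin t ht).1.2, rfl⟩,
        by rintro _ ⟨b, hb, hbX, rfl⟩; exact (hargmin t ht).2 b hb hbX⟩
    rw [hV t ht _ (hx t ht.le), hleast.csInf_eq, ← hdyn t ht, ih, nest_sub_of_lt u x ht]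

end TailCosts

theorem GBE_sufficient_conditions_general
    {n m : ℕ} (T : ℕ)
    (X : ℕ → Set (Fin n → ℝ)) (U : Set (Fin m → ℝ))
    (f : (Fin n → ℝ) → (Fin m → ℝ) → ℕ → (Fin n → ℝ))
    (x0 : Fin n → ℝ) (hx0 : x0 ∈ X 0)
    (J : (ℕ → Fin m → ℝ) → (ℕ → Fin n → ℝ) → ℝ)
    (φ : ℕ → (Fin n → ℝ) → (Fin m → ℝ) → ℝ → ℝ) (φT : (Fin n → ℝ) → ℝ)
    (hRep : IsRep T X U J φ φT) (hMono : MonoRep T X U φ φT)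
    (hUSC : USCRep T X U φ φT) (hBdd : BddRep T X U φ φT)
    (hGam : ∀ t, t < T → ∀ a ∈ X t, ∃ b ∈ U, f a b t ∈ X (t + 1))
    (V : (Fin n → ℝ) → ℕ → ℝ)
    (hVT : ∀ a ∈ X T, V a T = φT a)
    (hV : ∀ t, t < T → ∀ a ∈ X t, V a t =
      sInf {y : ℝ | ∃ b ∈ U, f a b t ∈ X (t + 1) ∧
        y = φ t a b (V (f a b t) (t + 1))})
    (ustar : ℕ → Fin m → ℝ) (xstar : ℕ → Fin n → ℝ)
    (hinit : xstar 0 = x0)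
    (hdyn : ∀ k, k < T → xstar (k + 1) = f (xstar k) (ustar k) k)
    (hargmin : ∀ k, k < T →
      (ustar k ∈ U ∧ f (xstar k) (ustar k) k ∈ X (k + 1)) ∧
      ∀ b ∈ U, f (xstar k) b k ∈ X (k + 1) →
        φ k (xstar k) (ustar k) (V (f (xstar k) (ustar k) k) (k + 1)) ≤
          φ k (xstar k) b (V (f (xstar k) b k) (k + 1))) :
    Feas T f X U x0 ustar xstar ∧
      J ustar xstar = sInf {y : ℝ | ∃ u x, Feas T f X U x0 u x ∧ y = J u x} := by
  have hfeas : Feas T f X U x0 ustar xstar := (feas_iff_gamSeq hx0).2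
    ⟨hinit, fun k _ hk => ⟨(hargmin k hk).1.1, hdyn k hk, hdyn k hk ▸ (hargmin k hk).1.2⟩⟩
  have hcosts : {y : ℝ | ∃ u x, Feas T f X U x0 u x ∧ y = J u x} =
      tailCosts T f X U φ φT x0 0 := by
    ext y
    constructor
    · rintro ⟨u, x, h, rfl⟩
      exact ⟨u, x, (feas_iff_gamSeq hx0).1 h, hRep.eq_nest_of_feas h⟩
    · rintro ⟨u, x, h, rfl⟩
      have h' := (feas_iff_gamSeq hx0).2 h
      exact ⟨u, x, h', (hRep.eq_nest_of_feas h').symm⟩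
  have hglb := isGLB_tailCosts hVT hV hMono hUSC hBdd hGam T.zero_le hx0
  refine ⟨hfeas, ?_⟩
  rw [hcosts, hglb.csInf_eq hglb.nonempty, hRep.eq_nest_of_feas hfeas, ← hinit,
    value_eq_nest_of_argmin hVT hV hfeas.2.1 hdyn hargmin T.zero_le, Nat.sub_zero]

/-- (Sufficient conditions.) Suppose the cost is naturally
monotonically backward separable, feasible input sets are nonempty, and `V`
satisfies the Generalized Bellman Equation. If the pair `(u*, x*)` starts at
`x0`, follows the dynamics, and `u*(k)` minimizes
`u ↦ φ_k(x*(k), u, V(f(x*(k),u,k), k+1))` over `Γ_{x*(k),k}` for every `k < T`,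
then `(u*, x*)` is feasible for the MSOP and attains the minimal cost. -/
theorem GBE_sufficient_conditions
    {n m : ℕ} (T : ℕ) (hT : 1 ≤ T)
    (X : ℕ → Set (Fin n → ℝ)) (U : Set (Fin m → ℝ))
    (f : (Fin n → ℝ) → (Fin m → ℝ) → ℕ → (Fin n → ℝ))
    (x0 : Fin n → ℝ) (hx0 : x0 ∈ X 0)
    (J : (ℕ → Fin m → ℝ) → (ℕ → Fin n → ℝ) → ℝ)
    (φ : ℕ → (Fin n → ℝ) → (Fin m → ℝ) → ℝ → ℝ) (φT : (Fin n → ℝ) → ℝ)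
    (hRep : IsRep T X U J φ φT) (hMono : MonoRep T X U φ φT)
    (hUSC : USCRep T X U φ φT) (hBdd : BddRep T X U φ φT)
    (hGam : ∀ t, t < T → ∀ a ∈ X t, ∃ b ∈ U, f a b t ∈ X (t + 1))
    (V : (Fin n → ℝ) → ℕ → ℝ)
    (hVT : ∀ a ∈ X T, V a T = φT a)
    (hV : ∀ t, t < T → ∀ a ∈ X t, V a t =
      sInf {y : ℝ | ∃ b ∈ U, f a b t ∈ X (t + 1) ∧
        y = φ t a b (V (f a b t) (t + 1))})
    (ustar : ℕ → Fin m → ℝ) (xstar : ℕ → Fin n → ℝ)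
    (hinit : xstar 0 = x0)
    (hdyn : ∀ k, k < T → xstar (k + 1) = f (xstar k) (ustar k) k)
    (hargmin : ∀ k, k < T →
      (ustar k ∈ U ∧ f (xstar k) (ustar k) k ∈ X (k + 1)) ∧
      ∀ b ∈ U, f (xstar k) b k ∈ X (k + 1) →
        φ k (xstar k) (ustar k) (V (f (xstar k) (ustar k) k) (k + 1)) ≤
          φ k (xstar k) b (V (f (xstar k) b k) (k + 1))) :
    Feas T f X U x0 ustar xstar ∧
      J ustar xstar = sInf {y : ℝ | ∃ u x, Feas T f X U x0 u x ∧ y = J u x} :=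
  GBE_sufficient_conditions_general T X U f x0 hx0 J φ φT hRep hMono hUSC hBdd hGam V hVT hV ustar
    xstar hinit hdyn hargmin
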